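/- Identity for the log-likelihood ratio statistic. For every n, every site i ∈ Λ̄_n and every ℓ with 1 ≤ ℓ ≤ R_n, the following deterministic identity holds for the observed sample σ: log L_n(i,ℓ) = [ Σ_{j∈Λ̄_n : X_j^{ℓ−1}(σ) = σ_i^{ℓ−1}} (1/N_n(X_j^ℓ(σ)))·log MPL_n(j,ℓ) ] − log MPL_n(i,ℓ−1), where log MPL_n(i,ℓ) = Σ_{a∈A} N_n(σ_i^ℓ, a)·log p̂_n(a|σ_i^ℓ) is the logarithm of the maximum pseudo-likelihood. -/

import Mathlib

open MeasureTheory Real Set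
open scoped ENNReal BigOperators Classical

namespace VN

/-- Sites of the lattice `ℤ^d`. -/
abbrev Site (d : ℕ) := Fin d → ℤ

/-- Configurations of the random field. -/
abbrev Conf (A : Type*) (d : ℕ) := Site d → A

/-- The maximum norm on `ℤ^d`, valued in `ℕ`. -/
def snorm {d : ℕ} (i : Site d) : ℕ := Finset.univ.sup fun k => (i k).natAbs

section SpecDef

variable (A : Type*) (d : ℕ) [MeasurableSpace A]

/-- The sub-σ-algebra `F_Γ` of events depending on the coordinates in `Γ` only. -/
def cylEvents (Γ : Set (Site d)) : MeasurableSpace (Conf A d) :=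
  MeasurableSpace.comap (fun ω => Γ.restrict ω) MeasurableSpace.pi

/-- A specification on `(Ω, F)`: a family of probability kernels `γ_Λ`, indexed by the
finite subsets `Λ ⊆ ℤ^d`, such that (a) `γ_Λ(B|·)` is `F_{Λᶜ}`-measurable, (b)
`γ_Λ(B|ω) = 1_B(ω)` for `B ∈ F_{Λᶜ}` and (c) `∫ γ_Δ(dω'|ω) γ_Λ(B|ω') = γ_Δ(B|ω)`
whenever `Λ ⊆ Δ`. -/
structure Specification where
  γ : Finset (Site d) → Conf A d → Measure (Conf A d)
  isProb : ∀ Λ ω, IsProbabilityMeasure (γ Λ ω)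
  measurable_out : ∀ (Λ : Finset (Site d)) (B : Set (Conf A d)), MeasurableSet B →
    Measurable[cylEvents A d ((↑Λ : Set (Site d))ᶜ)] fun ω => γ Λ ω B
  proper : ∀ (Λ : Finset (Site d)) (B : Set (Conf A d)),
    MeasurableSet[cylEvents A d ((↑Λ : Set (Site d))ᶜ)] B →
    ∀ ω, γ Λ ω B = B.indicator (fun _ => (1 : ℝ≥0∞)) ω
  compatible : ∀ (Λ Δ : Finset (Site d)), Λ ⊆ Δ →
    ∀ (B : Set (Conf A d)), MeasurableSet B →
    ∀ ω, ∫⁻ ω', γ Λ ω' B ∂(γ Δ ω) = γ Δ ω B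

end SpecDef

variable {A : Type*} {d : ℕ} [MeasurableSpace A]

/-- The cylinder set of configurations agreeing with `ζ` on `Λ`. -/
def cyl (Λ : Finset (Site d)) (ζ : {j : Site d // j ∈ Λ} → A) : Set (Conf A d) :=
  {ω | ∀ j : {j : Site d // j ∈ Λ}, ω j.1 = ζ j}

/-- Positivity of a specification: all cylinder probabilities are positive. -/
def Specification.Positive (S : Specification A d) : Prop :=
  ∀ (Λ : Finset (Site d)) (ζ : {j : Site d // j ∈ Λ} → A) (σ : Conf A d),
    0 < S.γ Λ σ (cyl Λ ζ)

/-- The one-point specification `γ_{{i}}(a | ω)`. -/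
noncomputable def onePoint (S : Specification A d) (i : Site d) (a : A) (ω : Conf A d) : ℝ≥0∞ :=
  S.γ {i} ω {ω' | ω' i = a}

/-- `q_min = inf_a inf_ω γ_{{0}}(a|ω)`. -/
noncomputable def qmin (S : Specification A d) : ℝ≥0∞ :=
  ⨅ (a : A) (ω : Conf A d), onePoint S 0 a ω

/-- `q_min` as a real number. -/
noncomputable def qminR (S : Specification A d) : ℝ := (qmin S).toReal

/-- The total variation norm `‖μ - ν‖_TV = 2 sup_B |μ(B) - ν(B)|`. -/
noncomputable def tvNorm (μ ν : Measure (Conf A d)) : ℝ :=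
  2 * ⨆ B : {B : Set (Conf A d) // MeasurableSet B}, |(μ B.1).toReal - (ν B.1).toReal|

/-- Dobrushin's interdependence coefficients
`r(i,j) = (1/2) sup {‖γ_{{i}}(·|ω) - γ_{{i}}(·|ω')‖_TV : ω, ω' agree off j}`. -/
noncomputable def dob (S : Specification A d) (i j : Site d) : ℝ :=
  (1 / 2) * ⨆ p : {p : Conf A d × Conf A d // ∀ k, k ≠ j → p.1 k = p.2 k},
    tvNorm (S.γ {i} p.1.1) (S.γ {i} p.1.2)

/-- Assumption 2: finite range `L` and Dobrushin's contraction condition. -/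
structure Assumption2 (S : Specification A d) (L : ℕ) : Prop where
  Lpos : 0 < L
  finiteRange : ∀ i : Site d, L ≤ snorm i → dob S 0 i = 0
  dobrushin : ∑' i : {i : Site d // i ≠ 0}, dob S 0 i.1 < 1

/-- The shift `T_i ω (j) = ω (i + j)`. -/
def shift (i : Site d) (ω : Conf A d) : Conf A d := fun j => ω (i + j)

/-- Translation covariance of a specification: `γ_Λ(·|ω) = γ_{Λ+i}(·|T_i ω)`. -/
def TransCovariant (S : Specification A d) : Prop :=
  ∀ (i : Site d) (Λ : Finset (Site d)) (ω : Conf A d),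
    S.γ (Λ.image (· + i)) ω = (S.γ Λ (shift i ω)).map (shift (-i))

/-- A variable-neighborhood random field: a probability measure `μ` consistent with a
specification `γ`, together with, for every finite `Λ` and every `ω`, a minimal finite
set `sp_Λ(ω) ⊆ Λᶜ` such that `γ_Λ(·|ω_{Λᶜ}) = γ_Λ(·|ω_{sp_Λ(ω)})`. -/
structure VNField (A : Type*) (d : ℕ) [MeasurableSpace A] where
  spec : Specification A d
  μ : Measure (Conf A d)
  prob : IsProbabilityMeasure μ
  consistent : ∀ (Λ : Finset (Site d)) (B : Set (Conf A d)), MeasurableSet B →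
    ∫⁻ ω, spec.γ Λ ω B ∂μ = μ B
  sp : Finset (Site d) → Conf A d → Finset (Site d)
  sp_disj : ∀ Λ ω, ∀ j ∈ sp Λ ω, j ∉ Λ
  sp_depends : ∀ Λ ω (ω' : Conf A d), (∀ j ∈ sp Λ ω, ω' j = ω j) →
    spec.γ Λ ω' = spec.γ Λ ω
  sp_min : ∀ Λ ω (Γ : Set (Site d)),
    (∀ ω' : Conf A d, (∀ j ∈ Γ, ω' j = ω j) → spec.γ Λ ω' = spec.γ Λ ω) →
    ↑(sp Λ ω) ⊆ Γ

/-- The length `l_i(ω)` of the context of site `i`: the radius of the smallest ball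
around `i` containing `sp_i(ω)`. -/
noncomputable def clen (F : VNField A d) (i : Site d) (ω : Conf A d) : ℕ :=
  sInf {ℓ : ℕ | 0 < ℓ ∧ ∀ j ∈ F.sp {i} ω, snorm (j - i) ≤ ℓ}

/-- `k(n) = (log |Λ_n|)^{1/(2d)}`. -/
noncomputable def kradius (d : ℕ) (Λ : Finset (Site d)) : ℝ :=
  (Real.log (Λ.card : ℝ)) ^ ((1 : ℝ) / (2 * (d : ℝ)))

/-- The security region `Λ̄_n = {i ∈ Λ_n : V_i(k(n)) ⊆ Λ_n}`. -/
noncomputable def bar (Λ : Finset (Site d)) : Finset (Site d) :=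
  Λ.filter fun i => ∀ j : Site d, ((snorm (j - i) : ℝ)) ≤ kradius d Λ → j ∈ Λ

/-- The security diameter `R_n = ⌊(log |Λ̄_n|)^{1/(2d)}⌋`. -/
noncomputable def Rad (Λ : Finset (Site d)) : ℕ :=
  ⌊(Real.log (((bar Λ).card : ℝ))) ^ ((1 : ℝ) / (2 * (d : ℝ)))⌋₊

/-- The ball `V_0(ℓ)` as a finite set. -/
noncomputable def ballF (d ℓ : ℕ) : Finset (Site d) :=
  (Finset.Icc (fun _ => -(ℓ : ℤ)) (fun _ => (ℓ : ℤ))).filter fun j => snorm j ≤ ℓ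

/-- The punctured ball `V_0^0(ℓ) = V_0(ℓ) \ {0}`. -/
noncomputable def pball (d ℓ : ℕ) : Finset (Site d) := (ballF d ℓ).erase 0

/-- The sphere `∂V_0(ℓ) = {j : ‖j‖ = ℓ}`. -/
noncomputable def sphereF (d ℓ : ℕ) : Finset (Site d) := (ballF d ℓ).filter fun j => snorm j = ℓ

/-- Local patterns `η ∈ A^{V_0^0(ℓ)}`. -/
abbrev Pattern (A : Type*) (d ℓ : ℕ) := {j : Site d // j ∈ pball d ℓ} → A

/-- The observation window `X_i^ℓ(ω) = (ω(i+j))_{0<‖j‖≤ℓ}`. -/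
def window (i : Site d) (ℓ : ℕ) (ω : Conf A d) : Pattern A d ℓ := fun j => ω (i + j.1)

section Counting

variable [Fintype A] [DecidableEq A] [Nonempty A]

/-- `N_n(η)`: the number of occurrences of the pattern `η` centered in `B`. -/
noncomputable def Ncnt (B : Finset (Site d)) (ℓ : ℕ) (σ : Conf A d) (η : Pattern A d ℓ) : ℕ :=
  (B.filter fun j => window j ℓ σ = η).card

/-- `N_n(η, a)`: occurrences of `η` with center symbol `a`. -/
noncomputable def Ncnt2 (B : Finset (Site d)) (ℓ : ℕ) (σ : Conf A d) (η : Pattern A d ℓ)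
    (a : A) : ℕ :=
  (B.filter fun j => window j ℓ σ = η ∧ σ j = a).card

/-- The empirical conditional probability `p̂_n(a|η)`. -/
noncomputable def phat (B : Finset (Site d)) (ℓ : ℕ) (σ : Conf A d) (η : Pattern A d ℓ)
    (a : A) : ℝ :=
  if Ncnt B ℓ σ η = 0 then 0 else (Ncnt2 B ℓ σ η a : ℝ) / (Ncnt B ℓ σ η : ℝ)

/-- The Kullback-Leibler information `D(P,Q) = Σ_a P(a) log (P(a)/Q(a))`. -/
noncomputable def KLdiv (P Q : A → ℝ) : ℝ := ∑ a : A, P a * Real.log (P a / Q a)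

/-- Extension of a pattern of radius `ℓ-1` by boundary values `v` on `∂V_0(ℓ)`. -/
noncomputable def extendPat (ℓ : ℕ) (η : Pattern A d (ℓ - 1))
    (v : {j : Site d // j ∈ sphereF d ℓ} → A) : Pattern A d ℓ := fun j =>
  if h : (j : Site d) ∈ pball d (ℓ - 1) then η ⟨j, h⟩
  else if h2 : (j : Site d) ∈ sphereF d ℓ then v ⟨j, h2⟩
  else Classical.choice (inferInstance : Nonempty A)

/-- The log-likelihood ratio statistic `log L_n(i, ℓ)`. -/
noncomputable def logL (B : Finset (Site d)) (σ : Conf A d) (i : Site d) (ℓ : ℕ) : ℝ :=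
  ∑ v : {j : Site d // j ∈ sphereF d ℓ} → A,
    (Ncnt B ℓ σ (extendPat ℓ (window i (ℓ - 1) σ) v) : ℝ) *
      KLdiv (phat B ℓ σ (extendPat ℓ (window i (ℓ - 1) σ) v))
        (phat B (ℓ - 1) σ (window i (ℓ - 1) σ))

/-- The penalty term `pen(ℓ,n) = κ |A| |A|^{|∂V_0(ℓ)|} log |Λ_n|`. -/
noncomputable def pen (A : Type*) [Fintype A] {d : ℕ} (κ : ℝ) (ℓ : ℕ)
    (Λ : Finset (Site d)) : ℝ :=
  κ * (Fintype.card A : ℝ) * (Fintype.card A : ℝ) ^ ((sphereF d ℓ).card) *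
    Real.log (Λ.card : ℝ)

/-- The estimator `l̂_n(i)` of the context length. -/
noncomputable def lhat (κ : ℝ) (Λ : Finset (Site d)) (σ : Conf A d) (i : Site d) : ℕ :=
  if h : ((Finset.Icc 1 (Rad Λ - 1)).filter fun ℓ =>
      ∀ k, ℓ < k → k ≤ Rad Λ → logL (bar Λ) σ i k ≤ pen A κ k Λ).Nonempty then
    ((Finset.Icc 1 (Rad Λ - 1)).filter fun ℓ =>
      ∀ k, ℓ < k → k ≤ Rad Λ → logL (bar Λ) σ i k ≤ pen A κ k Λ).min' h
  else Rad Λ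

/-- `p(η)`: the probability of observing the pattern `η`. -/
noncomputable def pPat (μ : Measure (Conf A d)) (ℓ : ℕ) (η : Pattern A d ℓ) : ℝ :=
  (μ {ω | ∀ j : {j : Site d // j ∈ pball d ℓ}, ω j.1 = η j}).toReal

/-- `p((η,a))`: the probability of observing `η` with center symbol `a`. -/
noncomputable def pPat2 (μ : Measure (Conf A d)) (ℓ : ℕ) (η : Pattern A d ℓ) (a : A) : ℝ :=
  (μ {ω | ω 0 = a ∧ ∀ j : {j : Site d // j ∈ pball d ℓ}, ω j.1 = η j}).toReal

/-- `p(a|η) = p((η,a))/p(η)`. -/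
noncomputable def pCond (μ : Measure (Conf A d)) (ℓ : ℕ) (η : Pattern A d ℓ) (a : A) : ℝ :=
  pPat2 μ ℓ η a / pPat μ ℓ η

/-- `α_0 = inf_{ℓ ≤ L} inf_{a, η} min (p(a|η), p(η))`. -/
noncomputable def alpha0 (μ : Measure (Conf A d)) (L : ℕ) : ℝ :=
  sInf {x : ℝ | ∃ ℓ, ℓ ≤ L ∧ ∃ a : A, ∃ η : Pattern A d ℓ,
    x = min (pCond μ ℓ η a) (pPat μ ℓ η)}

/-- `Δ_n(η) = Σ_a (N_n(η,a)/|Λ̄_n| log p̂_n(a|η) - p((η,a)) log p(a|η))`. -/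
noncomputable def Delta (μ : Measure (Conf A d)) (B : Finset (Site d)) (ℓ : ℕ)
    (σ : Conf A d) (η : Pattern A d ℓ) : ℝ :=
  ∑ a : A, ((Ncnt2 B ℓ σ η a : ℝ) / (B.card : ℝ) * Real.log (phat B ℓ σ η a)
    - pPat2 μ ℓ η a * Real.log (pCond μ ℓ η a))

/-- The sublattice `Λ̄_n^k = {j ∈ Λ̄_n : j = k + (4R_n+1) l}`. -/
noncomputable def subLat (Λ : Finset (Site d)) (k : Site d) : Finset (Site d) :=
  (bar Λ).filter fun j => ∃ l : Site d, j = k + (4 * (Rad Λ : ℤ) + 1) • l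

/-- `ℓ ≥ l_0(η)`: the pattern `η` of radius `ℓ` determines the context of the origin,
i.e. `sp_0(ω) ⊆ V_0(ℓ)` for every `ω` extending `η`. -/
def Saturated (F : VNField A d) (ℓ : ℕ) (η : Pattern A d ℓ) : Prop :=
  ∀ ω : Conf A d, (∀ j : {j : Site d // j ∈ pball d ℓ}, ω j.1 = η j) →
    ∀ j ∈ F.sp {0} ω, snorm j ≤ ℓ

/-- A canonical configuration extending the pattern `η`. -/
noncomputable def patExt (ℓ : ℕ) (η : Pattern A d ℓ) : Conf A d := fun j =>
  if h : j ∈ pball d ℓ then η ⟨j, h⟩ else Classical.choice (inferInstance : Nonempty A)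

/-- `γ_{{0}}(a|η)` for a saturated pattern `η`. -/
noncomputable def gamma0Pat (F : VNField A d) (ℓ : ℕ) (η : Pattern A d ℓ) (a : A) : ℝ :=
  (onePoint F.spec 0 a (patExt ℓ η)).toReal

/-- The typicality event `A(n, ℓ, k)`. -/
noncomputable def Aset (F : VNField A d) (Λ : Finset (Site d)) (ℓ : ℕ) (k : Site d) :
    Set (Conf A d) :=
  {σ | ∀ η : Pattern A d ℓ, Saturated F ℓ η →
    Real.log (((bar Λ).card : ℝ)) ≤ (3 / 2) * Real.log ((Ncnt (subLat Λ k) ℓ σ η : ℝ))}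

/-- The typicality event `B(n, ℓ) = ⋂_{‖k‖ ≤ 2 R_n} A(n, ℓ, k)`. -/
noncomputable def Bset (F : VNField A d) (Λ : Finset (Site d)) (ℓ : ℕ) : Set (Conf A d) :=
  {σ | ∀ k : Site d, snorm k ≤ 2 * Rad Λ → σ ∈ Aset F Λ ℓ k}

/-- The log maximum pseudo-likelihood `log MPL_n(i, ℓ)`. -/
noncomputable def logMPL (B : Finset (Site d)) (σ : Conf A d) (i : Site d) (ℓ : ℕ) : ℝ :=
  ∑ a : A, (Ncnt2 B ℓ σ (window i ℓ σ) a : ℝ) * Real.log (phat B ℓ σ (window i ℓ σ) a)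

/-- The conditional divergence `D(i, ℓ, σ)`. -/
noncomputable def Ddiv (μ : Measure (Conf A d)) (σ : Conf A d) (i : Site d) (ℓ : ℕ) : ℝ :=
  ∑ v : {j : Site d // j ∈ sphereF d ℓ} → A, ∑ a : A,
    pPat2 μ ℓ (extendPat ℓ (window i (ℓ - 1) σ) v) a *
      Real.log (pCond μ ℓ (extendPat ℓ (window i (ℓ - 1) σ) v) a /
        pCond μ (ℓ - 1) (window i (ℓ - 1) σ) a)

/-- The uniform mixing coefficient `Φ(m₁, m₂) = sup_{B ∈ m₂} ‖μ(B|m₁) - μ(B)‖_∞`. -/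
noncomputable def phiCoef (μ : Measure (Conf A d)) (m₁ m₂ : MeasurableSpace (Conf A d)) : ℝ :=
  ⨆ B : {B : Set (Conf A d) // MeasurableSet[m₂] B},
    (essSup (fun ω =>
      (‖(μ[(B.1).indicator (fun _ => (1 : ℝ)) | m₁]) ω - (μ B.1).toReal‖₊ : ℝ≥0∞)) μ).toReal

/-- The σ-algebra generated by `(Y_i)_{i ∈ Γ}` where `Y_i = 1{X_i^ℓ = η}`. -/
noncomputable def Gfield (ℓ : ℕ) (η : Pattern A d ℓ) (Γ : Set (Site d)) :
    MeasurableSpace (Conf A d) :=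
  MeasurableSpace.comap
    (fun ω => fun i : Γ => (decide (window (i : Site d) ℓ ω = η) : Bool)) MeasurableSpace.pi

/-- `Φ_{∞,1}^ℓ(n)`. -/
noncomputable def phiInf (μ : Measure (Conf A d)) (ℓ : ℕ) (η : Pattern A d ℓ) (n : ℕ) : ℝ :=
  ⨆ p : {p : Set (Site d) × Site d // ∀ i ∈ p.1, n ≤ snorm (p.2 - i)},
    phiCoef μ (Gfield ℓ η p.1.1) (Gfield ℓ η {p.1.2})

/-- `β_ℓ = 1 + Σ_{n ≥ 1} Φ_{∞,1}^ℓ(n) |∂V_0(n)|`. -/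
noncomputable def betal (μ : Measure (Conf A d)) (ℓ : ℕ) (η : Pattern A d ℓ) : ℝ :=
  1 + ∑' n : ℕ, if n = 0 then 0 else phiInf μ ℓ η n * ((sphereF d n).card : ℝ)

/-- Overriding the configuration `ω` on `Λ` with `ζ`. -/
def override (Λ : Finset (Site d)) (ζ : {j : Site d // j ∈ Λ} → A) (ω : Conf A d) :
    Conf A d := fun j => if h : j ∈ Λ then ζ ⟨j, h⟩ else ω j

end Counting

end VN


/-!
Extending the observed pattern `η` of radius `ℓ - 1` by every boundary value `v` on `∂V_0(ℓ)`
partitions the occurrences of `η` into the occurrences of the extended patterns `ηv`, so that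
`N_n(η, a) = Σ_v N_n(ηv, a)`. Writing `N_n(ηv) p̂_n(a|ηv) = N_n(ηv, a)`, each term of `log L_n` is
`log MPL(ηv) - Σ_a N_n(ηv, a) log p̂_n(a|η)`, and summing over `v` the second parts add up to
`log MPL(η)`. The first parts are regrouped into a sum over sites, each occurrence of `ηv`
contributing `1 / N_n(ηv)` of `log MPL(ηv)`.
-/

namespace VN

section Geometry

variable {d : ℕ}

lemma snorm_le_iff {k : Site d} {ℓ : ℕ} : snorm k ≤ ℓ ↔ ∀ m, (k m).natAbs ≤ ℓ := by
  simp [snorm, Finset.sup_le_iff]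

@[simp]
lemma snorm_zero : snorm (0 : Site d) = 0 := by
  simp [snorm]

lemma mem_ballF {k : Site d} {ℓ : ℕ} : k ∈ ballF d ℓ ↔ snorm k ≤ ℓ := by
  refine ⟨fun h => (Finset.mem_filter.1 h).2, fun h => Finset.mem_filter.2 ⟨?_, h⟩⟩
  refine Finset.mem_Icc.2 ⟨fun m => ?_, fun m => ?_⟩ <;>
    have := snorm_le_iff.1 h m <;> simp <;> omega

lemma mem_pball {k : Site d} {ℓ : ℕ} : k ∈ pball d ℓ ↔ k ≠ 0 ∧ snorm k ≤ ℓ := by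
  simp [pball, mem_ballF]

lemma mem_sphereF {k : Site d} {ℓ : ℕ} : k ∈ sphereF d ℓ ↔ snorm k = ℓ := by
  simp only [sphereF, Finset.mem_filter, mem_ballF, and_iff_right_iff_imp]
  exact le_of_eq

lemma pball_eq_pball_pred_union_sphereF {ℓ : ℕ} (hℓ : 1 ≤ ℓ) :
    pball d ℓ = pball d (ℓ - 1) ∪ sphereF d ℓ := by
  ext k
  simp only [Finset.mem_union, mem_pball, mem_sphereF]
  constructor
  · rintro ⟨hk, hle⟩
    rcases Nat.lt_or_ge (snorm k) ℓ with hlt | hge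
    · exact Or.inl ⟨hk, by omega⟩
    · exact Or.inr (by omega)
  · rintro (⟨hk, hle⟩ | rfl)
    · exact ⟨hk, by omega⟩
    · exact ⟨fun h => by simp [h] at hℓ, le_rfl⟩

lemma disjoint_pball_pred_sphereF {ℓ : ℕ} (hℓ : 1 ≤ ℓ) :
    Disjoint (pball d (ℓ - 1)) (sphereF d ℓ) := by
  refine Finset.disjoint_left.2 fun k hk hk' => ?_
  have := (mem_pball.1 hk).2
  have := mem_sphereF.1 hk'
  omega

end Geometry

section Patterns

variable {A : Type*} {d : ℕ}

def sphereWindow (j : Site d) (ℓ : ℕ) (ω : Conf A d) : {k : Site d // k ∈ sphereF d ℓ} → A :=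
  fun k => ω (j + k.1)

section Extension

variable [Nonempty A] {ℓ : ℕ} (η : Pattern A d (ℓ - 1)) (v : {k : Site d // k ∈ sphereF d ℓ} → A)

lemma extendPat_of_mem_pball {k : Site d} (hk : k ∈ pball d ℓ) (hk' : k ∈ pball d (ℓ - 1)) :
    extendPat ℓ η v ⟨k, hk⟩ = η ⟨k, hk'⟩ :=
  dif_pos hk'

lemma extendPat_of_mem_sphereF (hℓ : 1 ≤ ℓ) {k : Site d} (hk : k ∈ pball d ℓ)
    (hk' : k ∈ sphereF d ℓ) : extendPat ℓ η v ⟨k, hk⟩ = v ⟨k, hk'⟩ := by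
  have hk'' : k ∉ pball d (ℓ - 1) :=
    Finset.disjoint_right.1 (disjoint_pball_pred_sphereF hℓ) hk'
  rw [extendPat, dif_neg hk'', dif_pos hk']

lemma window_eq_extendPat_iff (hℓ : 1 ≤ ℓ) (j : Site d) (ω : Conf A d) :
    window j ℓ ω = extendPat ℓ η v ↔ window j (ℓ - 1) ω = η ∧ sphereWindow j ℓ ω = v := by
  have hunion := pball_eq_pball_pred_union_sphereF (d := d) hℓ
  simp only [funext_iff, Subtype.forall]
  constructor
  · intro h
    refine ⟨fun k hk => ?_, fun k hk => ?_⟩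
    · have hkℓ : k ∈ pball d ℓ := hunion ▸ Finset.mem_union_left _ hk
      rw [← extendPat_of_mem_pball η v hkℓ hk, ← h k hkℓ]
      rfl
    · have hkℓ : k ∈ pball d ℓ := hunion ▸ Finset.mem_union_right _ hk
      rw [sphereWindow, ← extendPat_of_mem_sphereF η v hℓ hkℓ hk]
      exact h k hkℓ
  · rintro ⟨hpred, hsphere⟩ k hk
    rcases Finset.mem_union.1 (hunion ▸ hk) with hk' | hk'
    · rw [extendPat_of_mem_pball η v hk hk', ← hpred k hk']
      rfl
    · rw [extendPat_of_mem_sphereF η v hℓ hk hk', ← hsphere k hk']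
      rfl

lemma sum_filter_window_pred_eq_sum_extendPat [Fintype A] [DecidableEq A] {M : Type*}
    [AddCommMonoid M] (hℓ : 1 ≤ ℓ) (B : Finset (Site d)) (ω : Conf A d) (f : Site d → M) :
    ∑ j ∈ B with window j (ℓ - 1) ω = η, f j =
      ∑ v, ∑ j ∈ B with window j ℓ ω = extendPat ℓ η v, f j := by
  rw [← Finset.sum_fiberwise _ (sphereWindow · ℓ ω)]
  refine Finset.sum_congr rfl fun v _ => ?_
  rw [Finset.filter_filter]
  exact Finset.sum_congr (Finset.filter_congr fun j _ =>
    (window_eq_extendPat_iff η v hℓ j ω).symm) fun _ _ => rfl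

end Extension

section Counting

variable [DecidableEq A] (B : Finset (Site d)) (ℓ : ℕ) (ω : Conf A d)

lemma Ncnt2_le_Ncnt (η : Pattern A d ℓ) (a : A) : Ncnt2 B ℓ ω η a ≤ Ncnt B ℓ ω η :=
  Finset.card_le_card fun _ hj =>
    Finset.mem_filter.2 ⟨(Finset.mem_filter.1 hj).1, (Finset.mem_filter.1 hj).2.1⟩

lemma Ncnt2_eq_sum (η : Pattern A d ℓ) (a : A) :
    Ncnt2 B ℓ ω η a = ∑ j ∈ B with window j ℓ ω = η, if ω j = a then 1 else 0 := by
  rw [Finset.sum_boole, Finset.filter_filter, Nat.cast_id]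
  rfl

lemma Ncnt_mul_phat (η : Pattern A d ℓ) (a : A) :
    (Ncnt B ℓ ω η : ℝ) * phat B ℓ ω η a = Ncnt2 B ℓ ω η a := by
  rw [phat]
  split_ifs with h
  · simp [h, Nat.le_zero.1 (h ▸ Ncnt2_le_Ncnt B ℓ ω η a)]
  · field_simp

lemma phat_ne_zero_iff (η : Pattern A d ℓ) (a : A) :
    phat B ℓ ω η a ≠ 0 ↔ Ncnt2 B ℓ ω η a ≠ 0 := by
  rw [phat]
  split_ifs with h
  · simp [Nat.le_zero.1 (h ▸ Ncnt2_le_Ncnt B ℓ ω η a)]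
  · simp [h]

/-- The log maximum pseudo-likelihood of an arbitrary pattern `η`, so that
`logMPL B ω j ℓ = logMPLPat B ℓ ω (window j ℓ ω)`. -/
noncomputable def logMPLPat [Fintype A] (η : Pattern A d ℓ) : ℝ :=
  ∑ a : A, (Ncnt2 B ℓ ω η a : ℝ) * Real.log (phat B ℓ ω η a)

lemma sum_inv_Ncnt_mul_logMPLPat [Fintype A] (η : Pattern A d ℓ) :
    ∑ j ∈ B with window j ℓ ω = η,
        (Ncnt B ℓ ω (window j ℓ ω) : ℝ)⁻¹ * logMPLPat B ℓ ω (window j ℓ ω) =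
      logMPLPat B ℓ ω η := by
  rw [Finset.sum_congr rfl fun j hj => by rw [(Finset.mem_filter.1 hj).2], Finset.sum_const,
    nsmul_eq_mul]
  change (Ncnt B ℓ ω η : ℝ) * _ = _
  by_cases h : Ncnt B ℓ ω η = 0
  · have hzero (a : A) : Ncnt2 B ℓ ω η a = 0 := Nat.le_zero.1 (h ▸ Ncnt2_le_Ncnt B ℓ ω η a)
    simp [logMPLPat, h, hzero]
  · rw [← mul_assoc, mul_inv_cancel₀ (by exact_mod_cast h), one_mul]

end Counting

lemma sum_Ncnt2_extendPat [Fintype A] [DecidableEq A] [Nonempty A] {ℓ : ℕ} (hℓ : 1 ≤ ℓ)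
    (B : Finset (Site d)) (ω : Conf A d) (η : Pattern A d (ℓ - 1)) (a : A) :
    ∑ v, Ncnt2 B ℓ ω (extendPat ℓ η v) a = Ncnt2 B (ℓ - 1) ω η a := by
  simp only [Ncnt2_eq_sum]
  exact (sum_filter_window_pred_eq_sum_extendPat η hℓ B ω _).symm

lemma mul_KLdiv_eq_sub [Fintype A] {P Q : A → ℝ} (hPQ : ∀ a, P a ≠ 0 → Q a ≠ 0) (c : ℝ) :
    c * KLdiv P Q = ∑ a, c * P a * Real.log (P a) - ∑ a, c * P a * Real.log (Q a) := by
  rw [KLdiv, Finset.mul_sum, ← Finset.sum_sub_distrib]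
  refine Finset.sum_congr rfl fun a _ => ?_
  by_cases hP : P a = 0
  · simp [hP]
  · rw [Real.log_div hP (hPQ a hP)]
    ring

lemma sum_Ncnt_mul_KLdiv_extendPat [Fintype A] [DecidableEq A] [Nonempty A] {ℓ : ℕ}
    (hℓ : 1 ≤ ℓ) (B : Finset (Site d)) (ω : Conf A d) (η : Pattern A d (ℓ - 1)) :
    ∑ v, (Ncnt B ℓ ω (extendPat ℓ η v) : ℝ) *
        KLdiv (phat B ℓ ω (extendPat ℓ η v)) (phat B (ℓ - 1) ω η) =
      (∑ j ∈ B with window j (ℓ - 1) ω = η,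
        (Ncnt B ℓ ω (window j ℓ ω) : ℝ)⁻¹ * logMPLPat B ℓ ω (window j ℓ ω)) -
        logMPLPat B (ℓ - 1) ω η := by
  have hsupport (v) (a : A) :
      phat B ℓ ω (extendPat ℓ η v) a ≠ 0 → phat B (ℓ - 1) ω η a ≠ 0 := by
    rw [phat_ne_zero_iff, phat_ne_zero_iff, ← sum_Ncnt2_extendPat hℓ B ω η a]
    exact fun h hsum => h (Finset.sum_eq_zero_iff.1 hsum v (Finset.mem_univ v))
  have hterm (v) : (Ncnt B ℓ ω (extendPat ℓ η v) : ℝ) *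
        KLdiv (phat B ℓ ω (extendPat ℓ η v)) (phat B (ℓ - 1) ω η) =
      logMPLPat B ℓ ω (extendPat ℓ η v) -
        ∑ a, (Ncnt2 B ℓ ω (extendPat ℓ η v) a : ℝ) * Real.log (phat B (ℓ - 1) ω η a) := by
    simp only [mul_KLdiv_eq_sub (hsupport v), Ncnt_mul_phat]
    rfl
  calc _ = ∑ v, logMPLPat B ℓ ω (extendPat ℓ η v) -
        ∑ a, (∑ v, (Ncnt2 B ℓ ω (extendPat ℓ η v) a : ℝ)) * Real.log (phat B (ℓ - 1) ω η a) := by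
        rw [Finset.sum_congr rfl fun v _ => hterm v, Finset.sum_sub_distrib, Finset.sum_comm]
        simp only [Finset.sum_mul]
    _ = _ := by
        simp only [sum_filter_window_pred_eq_sum_extendPat η hℓ, sum_inv_Ncnt_mul_logMPLPat,
          ← Nat.cast_sum, sum_Ncnt2_extendPat hℓ B ω]
        rfl

end Patterns

theorem logL_identity_general {A : Type*} [Fintype A] [DecidableEq A] [Nonempty A] {d : ℕ}
    (Λseq : ℕ → Finset (Site d)) (σ : Conf A d) (n : ℕ) (i : Site d) (ℓ : ℕ) (hℓ : 1 ≤ ℓ) :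
    logL (bar (Λseq n)) σ i ℓ =
      (∑ j ∈ (bar (Λseq n)).filter fun j => window j (ℓ - 1) σ = window i (ℓ - 1) σ,
        ((Ncnt (bar (Λseq n)) ℓ σ (window j ℓ σ) : ℝ))⁻¹ * logMPL (bar (Λseq n)) σ j ℓ)
      - logMPL (bar (Λseq n)) σ i (ℓ - 1) :=
  sum_Ncnt_mul_KLdiv_extendPat hℓ _ σ _

/-- **Identity for the log-likelihood ratio statistic.** For every `n`, every site
`i ∈ Λ̄_n` and every `1 ≤ ℓ ≤ R_n`,
`log L_n(i,ℓ) = [Σ_{j ∈ Λ̄_n : X_j^{ℓ-1} = σ_i^{ℓ-1}} (1/N_n(X_j^ℓ)) log MPL_n(j,ℓ)]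
  - log MPL_n(i,ℓ-1)`. -/
theorem logL_identity {A : Type*} [MeasurableSpace A] [Fintype A] [DecidableEq A]
    [Nonempty A] {d : ℕ} (hd : 0 < d)
    (Λseq : ℕ → Finset (Site d)) (hmono : Monotone Λseq)
    (habs : ∀ Γ : Finset (Site d), ∃ n, Γ ⊆ Λseq n)
    (σ : Conf A d) (n : ℕ) (i : Site d) (hi : i ∈ bar (Λseq n))
    (ℓ : ℕ) (hℓ : 1 ≤ ℓ) (hℓR : ℓ ≤ Rad (Λseq n)) :
    logL (bar (Λseq n)) σ i ℓ =
      (∑ j ∈ (bar (Λseq n)).filter fun j => window j (ℓ - 1) σ = window i (ℓ - 1) σ,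
        ((Ncnt (bar (Λseq n)) ℓ σ (window j ℓ σ) : ℝ))⁻¹ * logMPL (bar (Λseq n)) σ j ℓ)
      - logMPL (bar (Λseq n)) σ i (ℓ - 1) :=
  logL_identity_general Λseq σ n i ℓ hℓ

end VN
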